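/- arXiv:1601.08072 — 5 statements merged into one kernel-verified Lean document; each statement's English description precedes it below -/
import Mathlib

section
/- Ω ∩ Ω′ = Z; that is, the intersection of the two unbounded Reinhardt domains Ω and Ω′ is exactly the closed polydisc Z = {(z₁,z₂) ∈ ℂ² : |z₁| ≤ 4 and |z₂| ≤ 4}. -/
open Complex

/-!
Every pairing of an unbounded piece of `Ω` with one of `Ω′` is empty. Since `log₄ r ≥ 1` for
`r ≥ 4`, points of `X` have `|z₂| < 1/(2|z₁|)`, which is below `4` (ruling out `Y′`) and, because
`1/r - 1/r³ ≥ 1/(2r)`, below the shell `X′`. The shell `Y` forces `|z₁| < 2`, ruling out `X′`.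
The remaining pairings are the mirror images.
-/

lemma lt_one_div_two_mul_of_lt_one_div_two_mul_mul_logb {r a : ℝ} (hr : 4 ≤ r)
    (h : a < 1 / (2 * r * Real.logb 4 r)) : a < 1 / (2 * r) := by
  have hlog : 1 ≤ Real.logb 4 r := by
    rw [← Real.logb_self_eq_one (by norm_num : (1 : ℝ) < 4)]
    exact Real.logb_le_logb_of_le (by norm_num) (by norm_num) hr
  calc a < 1 / (2 * r * Real.logb 4 r) := h
    _ ≤ 1 / (2 * r) :=
      one_div_le_one_div_of_le (by positivity) (le_mul_of_one_le_right (by positivity) hlog)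

lemma one_div_two_mul_le_of_abs_sub_one_div_lt {r a : ℝ} (hr : 2 ≤ r)
    (h : |a - 1 / r| < 1 / r ^ 3) : 1 / (2 * r) ≤ a := by
  have hgap : 1 / (2 * r) ≤ 1 / r - 1 / r ^ 3 := by
    rw [← sub_nonneg]
    have hsplit : 1 / r - 1 / r ^ 3 - 1 / (2 * r) = (r ^ 2 - 2) / (2 * r ^ 3) := by
      field_simp; ring
    rw [hsplit]
    exact div_nonneg (by nlinarith) (by positivity)
  linarith [(abs_lt.mp h).1]

lemma lt_two_of_abs_sub_one_div_lt {s a : ℝ} (hs : 1 ≤ s) (h : |a - 1 / s| < 1 / s ^ 3) :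
    a < 2 := by
  have h1 : 1 / s ≤ 1 := by rw [div_le_one₀ (by positivity)]; exact hs
  have h3 : 1 / s ^ 3 ≤ 1 := by rw [div_le_one₀ (by positivity)]; exact one_le_pow₀ hs
  linarith [(abs_lt.mp h).2]

lemma one_div_two_mul_lt_four {r : ℝ} (hr : 4 < r) : 1 / (2 * r) < 4 := by
  rw [div_lt_iff₀ (by positivity)]; linarith

/-- The intersection of the two unbounded Reinhardt domains `Ω = X ∪ Y ∪ Z` and
`Ω′ = X′ ∪ Y′ ∪ Z` is exactly the closed polydisc `Z`. -/
theorem stmt_3 (X Y Z X' Y' Ω Ω' : Set (ℂ × ℂ))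
    (hX : X = {z : ℂ × ℂ | 4 < ‖z.1‖ ∧
      ‖z.2‖ < 1 / (2 * ‖z.1‖ * (Real.log (‖z.1‖) / Real.log 4))})
    (hY : Y = {z : ℂ × ℂ | 4 < ‖z.2‖ ∧
      |‖z.1‖ - 1 / ‖z.2‖| < 1 / (‖z.2‖) ^ 3})
    (hZ : Z = {z : ℂ × ℂ | ‖z.1‖ ≤ 4 ∧ ‖z.2‖ ≤ 4})
    (hX' : X' = {z : ℂ × ℂ | 4 < ‖z.1‖ ∧
      |‖z.2‖ - 1 / ‖z.1‖| < 1 / (‖z.1‖) ^ 3})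
    (hY' : Y' = {z : ℂ × ℂ | 4 < ‖z.2‖ ∧
      ‖z.1‖ < 1 / (2 * ‖z.2‖ * (Real.log (‖z.2‖) / Real.log 4))})
    (hΩ : Ω = X ∪ Y ∪ Z) (hΩ' : Ω' = X' ∪ Y' ∪ Z) :
    Ω ∩ Ω' = Z := by
  subst hX hY hZ hX' hY' hΩ hΩ'
  refine Set.Subset.antisymm ?_ fun z hz => ⟨Or.inr hz, Or.inr hz⟩
  rintro z ⟨(⟨hX₁, hX₂⟩ | ⟨hY₂, hY₁⟩) | hZ, (⟨hX'₁, hX'₂⟩ | ⟨hY'₂, hY'₁⟩) | hZ'⟩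
  all_goals first | assumption | exfalso
  · have := lt_one_div_two_mul_of_lt_one_div_two_mul_mul_logb hX₁.le hX₂
    linarith [one_div_two_mul_le_of_abs_sub_one_div_lt (by linarith) hX'₂]
  · have := lt_one_div_two_mul_of_lt_one_div_two_mul_mul_logb hX₁.le hX₂
    linarith [one_div_two_mul_lt_four hX₁]
  · linarith [lt_two_of_abs_sub_one_div_lt (by linarith) hY₁]
  · have := lt_one_div_two_mul_of_lt_one_div_two_mul_mul_logb hY'₂.le hY'₁
    linarith [one_div_two_mul_le_of_abs_sub_one_div_lt (by linarith) hY₁]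
end

section
/- Both Ω and Ω′ have finite Lebesgue volume: vol(Ω) < ∞ and vol(Ω′) < ∞ (even though both sets are unbounded). -/
/-!
Slice along the first coordinate. Over `|z₁| = t` the slices of `X` and `X′` are a disc of
radius `1/(2t log₄ t)` and an annulus of area `4π/t⁴`, so by Tonelli both volumes are bounded
by `2π ∫₄^∞ t · area(t) dt`, which converges since `t · area(t)` is `≍ 1/(t log² t)`,
resp. `≍ t⁻³`. Swapping the coordinates turns `Y′`, `Y` into `X`, `X′`, and `Z` is compact.
-/

open Complex MeasureTheory Metric Set Filter Topology Module
open scoped Real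

namespace MeasureTheory.Measure

theorem prod_lt_top_of_measure_slice_le {α β : Type*} [MeasurableSpace α]
    [MeasurableSpace β] {μ : Measure α} {ν : Measure β} {s : Set (α × β)} (hs : MeasurableSet s)
    {f : α → ℝ} (hf : Integrable f μ) (hslice : ∀ x, ν (Prod.mk x ⁻¹' s) ≤ ENNReal.ofReal (f x)) :
    μ.prod ν s < ⊤ :=
  (prod_apply_le hs).trans_lt ((lintegral_mono hslice).trans_lt hf.lintegral_lt_top)

theorem prod_lt_top_of_measure_slice_le_radial {E β : Type*} [NormedAddCommGroup E]
    [NormedSpace ℝ E] [FiniteDimensional ℝ E] [MeasurableSpace E] [BorelSpace E] [Nontrivial E]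
    {μ : Measure E} [μ.IsAddHaarMeasure] [MeasurableSpace β] {ν : Measure β}
    {s : Set (E × β)} (hs : MeasurableSet s) {a : ℝ} (hsa : s ⊆ {p | a < ‖p.1‖}) {g : ℝ → ℝ}
    (hg : IntegrableOn (fun r => r ^ (finrank ℝ E - 1) * g r) (Ioi a))
    (hslice : ∀ x : E, a < ‖x‖ → ν (Prod.mk x ⁻¹' s) ≤ ENNReal.ofReal (g ‖x‖)) :
    μ.prod ν s < ⊤ := by
  refine prod_lt_top_of_measure_slice_le hs (f := fun x => (Ioi a).indicator g ‖x‖)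
    ?_ fun x => ?_
  · rw [integrable_fun_norm_addHaar]
    refine (hg.integrable_indicator measurableSet_Ioi).integrableOn.congr_fun (fun r _ => ?_)
      measurableSet_Ioi
    simp [indicator_mul_right]
  · by_cases hx : a < ‖x‖
    · simpa [indicator_of_mem (mem_Ioi.mpr hx)] using hslice x hx
    · have hempty : Prod.mk x ⁻¹' s = ∅ := eq_empty_of_forall_notMem fun y hy => hx (hsa hy)
      simp [hempty]

theorem prod_preimage_swap {α β : Type*} [MeasurableSpace α] [MeasurableSpace β]
    {μ : Measure α} {ν : Measure β} [SFinite μ] [SFinite ν] (s : Set (β × α)) :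
    μ.prod ν (Prod.swap ⁻¹' s) = ν.prod μ s :=
  measurePreserving_swap.measure_preimage_equiv (f := MeasurableEquiv.prodComm) s

end MeasureTheory.Measure

theorem Complex.volume_ball_eq_ofReal (x : ℂ) {r : ℝ} (hr : 0 ≤ r) :
    volume (ball x r) = ENNReal.ofReal (π * r ^ 2) := by
  rw [Complex.volume_ball, ← ENNReal.ofReal_pow hr, ← NNReal.coe_real_pi,
    ENNReal.ofReal_mul (NNReal.coe_nonneg _), ENNReal.ofReal_coe_nnreal, mul_comm]

theorem Complex.volume_ball_diff_closedBall (x : ℂ) {r R : ℝ} (hr : 0 ≤ r) (hrR : r < R) :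
    volume (ball x R \ closedBall x r) = ENNReal.ofReal (π * (R ^ 2 - r ^ 2)) := by
  rw [measure_sdiff (closedBall_subset_ball hrR) measurableSet_closedBall.nullMeasurableSet
      measure_closedBall_lt_top.ne, Measure.addHaar_closedBall_eq_addHaar_ball,
    volume_ball_eq_ofReal x hr, volume_ball_eq_ofReal x (hr.trans hrR.le),
    ← ENNReal.ofReal_sub _ (by positivity), mul_sub]

theorem integrableOn_Ioi_inv_mul_log_sq {a : ℝ} (ha : 1 < a) :
    IntegrableOn (fun r => (r * Real.log r ^ 2)⁻¹) (Ioi a) := by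
  refine integrableOn_Ioi_deriv_of_nonneg' (g := fun r => -(Real.log r)⁻¹) (l := 0)
    (fun r hr => ?_) (fun r hr => ?_) ?_
  · have hr1 : 1 < r := ha.trans_le hr
    refine ((Real.hasDerivAt_log (by linarith)).inv (Real.log_pos hr1).ne').neg.congr_deriv ?_
    rw [neg_div, neg_neg, div_eq_mul_inv, mul_inv]
  · have hr0 : 0 < r := by linarith [mem_Ioi.mp hr]
    positivity
  · simpa using Real.tendsto_log_atTop.inv_tendsto_atTop.neg

theorem volume_cusp_lt_top {a : ℝ} (ha : 1 < a) {c : ℝ} (hc : 0 ≤ c) :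
    volume {z : ℂ × ℂ | a < ‖z.1‖ ∧ ‖z.2‖ < c / (‖z.1‖ * Real.log ‖z.1‖)} < ⊤ := by
  refine Measure.prod_lt_top_of_measure_slice_le_radial (by measurability) (fun z hz => hz.1)
    (g := fun r => π * (c / (r * Real.log r)) ^ 2) ?_ fun z hz => ?_
  · refine IntegrableOn.congr_fun ((integrableOn_Ioi_inv_mul_log_sq ha).const_mul (π * c ^ 2))
      (fun r hr => ?_) measurableSet_Ioi
    have hr1 : 1 < r := ha.trans hr
    have hlog : Real.log r ≠ 0 := (Real.log_pos hr1).ne'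
    have hr0 : r ≠ 0 := by positivity
    simp only [Complex.finrank_real_complex, Nat.reduceSub, pow_one]
    field_simp
  · have hslice : Prod.mk z ⁻¹' {z : ℂ × ℂ | a < ‖z.1‖ ∧ ‖z.2‖ < c / (‖z.1‖ * Real.log ‖z.1‖)}
        = ball 0 (c / (‖z‖ * Real.log ‖z‖)) := by
      ext w
      simp [hz]
    have hlog : 0 < Real.log ‖z‖ := Real.log_pos (ha.trans hz)
    rw [hslice, Complex.volume_ball_eq_ofReal _ (by positivity)]

theorem volume_shell_lt_top {a : ℝ} (ha : 1 ≤ a) :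
    volume {z : ℂ × ℂ | a < ‖z.1‖ ∧ |‖z.2‖ - 1 / ‖z.1‖| < 1 / ‖z.1‖ ^ 3} < ⊤ := by
  refine Measure.prod_lt_top_of_measure_slice_le_radial (by measurability) (fun z hz => hz.1)
    (g := fun r => 4 * π / r ^ 4) ?_ fun z hz => ?_
  · refine IntegrableOn.congr_fun ((integrableOn_Ioi_rpow_of_lt (by norm_num : (-3 : ℝ) < -1)
      (by linarith : 0 < a)).const_mul (4 * π)) (fun r hr => ?_) measurableSet_Ioi
    have hr0 : 0 < r := by linarith [mem_Ioi.mp hr]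
    simp only [Complex.finrank_real_complex, Nat.reduceSub, pow_one]
    rw [Real.rpow_neg hr0.le, Real.rpow_ofNat]
    field_simp
  · have hslice : Prod.mk z ⁻¹' {z : ℂ × ℂ | a < ‖z.1‖ ∧ |‖z.2‖ - 1 / ‖z.1‖| < 1 / ‖z.1‖ ^ 3}
        = ball 0 (1 / ‖z‖ + 1 / ‖z‖ ^ 3) \ closedBall 0 (1 / ‖z‖ - 1 / ‖z‖ ^ 3) := by
      ext w
      simp only [mem_preimage, mem_ofPred_eq, hz, true_and, abs_sub_lt_iff, Set.mem_sdiff,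
        mem_ball_zero_iff, mem_closedBall_zero_iff]
      constructor <;> intro h <;> constructor <;> linarith [h.1, h.2]
    have ht : 1 < ‖z‖ := ha.trans_lt hz
    have hinner : 0 ≤ 1 / ‖z‖ - 1 / ‖z‖ ^ 3 :=
      sub_nonneg.2 (one_div_le_one_div_of_le (by positivity) (le_self_pow₀ ht.le (by norm_num)))
    have hwidth : 0 < 1 / ‖z‖ ^ 3 := by positivity
    rw [hslice, Complex.volume_ball_diff_closedBall _ hinner (by linarith)]
    refine ENNReal.ofReal_le_ofReal (le_of_eq ?_)
    field_simp
    ring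

/-- Both unbounded Reinhardt domains `Ω` and `Ω′` have finite Lebesgue volume. -/
theorem stmt_4 (X Y Z X' Y' Ω Ω' : Set (ℂ × ℂ))
    (hX : X = {z : ℂ × ℂ | 4 < ‖z.1‖ ∧
      ‖z.2‖ < 1 / (2 * ‖z.1‖ * (Real.log (‖z.1‖) / Real.log 4))})
    (hY : Y = {z : ℂ × ℂ | 4 < ‖z.2‖ ∧
      |‖z.1‖ - 1 / ‖z.2‖| < 1 / (‖z.2‖) ^ 3})
    (hZ : Z = {z : ℂ × ℂ | ‖z.1‖ ≤ 4 ∧ ‖z.2‖ ≤ 4})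
    (hX' : X' = {z : ℂ × ℂ | 4 < ‖z.1‖ ∧
      |‖z.2‖ - 1 / ‖z.1‖| < 1 / (‖z.1‖) ^ 3})
    (hY' : Y' = {z : ℂ × ℂ | 4 < ‖z.2‖ ∧
      ‖z.1‖ < 1 / (2 * ‖z.2‖ * (Real.log (‖z.2‖) / Real.log 4))})
    (hΩ : Ω = X ∪ Y ∪ Z) (hΩ' : Ω' = X' ∪ Y' ∪ Z) :
    volume Ω < ⊤ ∧ volume Ω' < ⊤ := by
  have hρ (t : ℝ) :
      1 / (2 * t * (Real.log t / Real.log 4)) = Real.log 4 / 2 / (t * Real.log t) := by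
    rw [mul_div_assoc', one_div_div]; ring
  have hXfin : volume X < ⊤ := by
    simpa only [hX, hρ] using volume_cusp_lt_top (by norm_num : (1 : ℝ) < 4)
      (by positivity : 0 ≤ Real.log 4 / 2)
  have hX'fin : volume X' < ⊤ := hX' ▸ volume_shell_lt_top (by norm_num)
  have hYfin : volume Y < ⊤ := by
    rw [show Y = Prod.swap ⁻¹' X' by rw [hY, hX']; rfl]
    exact (Measure.prod_preimage_swap X').trans_lt hX'fin
  have hY'fin : volume Y' < ⊤ := by
    rw [show Y' = Prod.swap ⁻¹' X by rw [hY', hX]; rfl]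
    exact (Measure.prod_preimage_swap X).trans_lt hXfin
  have hZfin : volume Z < ⊤ := by
    rw [show Z = closedBall 0 4 by ext z; simp [hZ, Prod.norm_def]]
    exact measure_closedBall_lt_top
  rw [hΩ, hΩ']
  exact ⟨measure_union_lt_top (measure_union_lt_top hXfin hYfin) hZfin,
    measure_union_lt_top (measure_union_lt_top hX'fin hY'fin) hZfin⟩
end

section
/- For every natural number k, 0 < c_k² < ∞, where c_k² = ∫_Ω |z₁ z₂|^{2k} dV(z₁,z₂); i.e., each monomial (z₁z₂)^k is square-integrable on Ω with strictly positive L²-norm. -/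
open Complex MeasureTheory

/-!
On `Ω` the product `|z₁ z₂|` is bounded (by `1`, `2`, `16` on `X`, `Y`, `Z`), so finiteness
reduces to `vol Ω < ∞`. By Tonelli, the volumes of `X` and `Y` are integrals of the areas of their
slices over the large coordinate, which we bound shell by shell on `4^(n+1) ≤ |w| < 4^(n+2)`.
The slices of `X` are discs of area `≲ 16^{-n} (n+1)^{-2}`; the slices of `Y` are annuli of width
`2|z₂|⁻³` around radius `|z₂|⁻¹`, of area `4π|z₂|⁻⁴`. Against shell areas `≲ 16^n`, both sums
converge. Positivity holds because the integrand is nonzero on the open set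
`{‖z‖ < 4, z₁ z₂ ≠ 0} ⊆ Z`.
-/

open Metric Set Real
open scoped ENNReal

theorem exists_pow_succ_le_lt_pow_add_two {b t : ℝ} (hb : 1 < b) (ht : b < t) :
    ∃ n : ℕ, b ^ (n + 1) ≤ t ∧ t < b ^ (n + 2) := by
  obtain ⟨n, h1, h2⟩ := exists_nat_pow_near (hb.le.trans ht.le) hb
  cases n with
  | zero => exact absurd h2 (by simpa using ht.le)
  | succ m => exact ⟨m, h1, h2⟩

theorem Complex.volume_ball_of_nonneg (a : ℂ) {r : ℝ} (hr : 0 ≤ r) :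
    volume (ball a r) = ENNReal.ofReal (π * r ^ 2) := by
  rw [Complex.volume_ball, ← ENNReal.ofReal_pow hr, ← NNReal.coe_real_pi,
    ENNReal.ofReal_coe_nnreal.symm, ← ENNReal.ofReal_mul (by positivity), mul_comm]

theorem Complex.volume_setOf_abs_norm_sub_lt_le {r ε : ℝ} (hε : 0 < ε) (hεr : ε ≤ r) :
    volume {x : ℂ | |‖x‖ - r| < ε} ≤ ENNReal.ofReal (4 * π * r * ε) := by
  have hsub : {x : ℂ | |‖x‖ - r| < ε} ⊆ ball 0 (r + ε) \ closedBall 0 (r - ε) := by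
    intro x hx
    rw [mem_ofPred_eq, abs_lt] at hx
    simp only [mem_sdiff, mem_ball_zero_iff, mem_closedBall_zero_iff, not_le]
    constructor <;> linarith
  calc volume {x : ℂ | |‖x‖ - r| < ε}
      ≤ volume (ball (0 : ℂ) (r + ε)) - volume (closedBall (0 : ℂ) (r - ε)) := by
        rw [← measure_sdiff (closedBall_subset_ball (by linarith))
          measurableSet_closedBall.nullMeasurableSet measure_closedBall_lt_top.ne]
        exact measure_mono hsub
    _ = ENNReal.ofReal (4 * π * r * ε) := by
        rw [Measure.addHaar_closedBall_eq_addHaar_ball, volume_ball_of_nonneg _ (by linarith),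
          volume_ball_of_nonneg _ (by linarith), ← ENNReal.ofReal_sub _ (by positivity)]
        ring_nf

theorem MeasureTheory.Measure.prod_lt_top_of_slice_le {α β : Type*} [MeasurableSpace α]
    [MeasurableSpace β] {μ : Measure α} {ν : Measure β} [SFinite ν] {S : Set (α × β)}
    (hS : MeasurableSet S) {A : ℕ → Set α} (hA : ∀ n, MeasurableSet (A n)) {c : ℕ → ℝ≥0∞}
    (hc : ∑' n, c n * μ (A n) ≠ ∞) (hslice : ∀ x, ∃ n, x ∈ A n ∧ ν (Prod.mk x ⁻¹' S) ≤ c n) :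
    μ.prod ν S < ∞ := by
  rw [Measure.prod_apply hS]
  calc ∫⁻ x, ν (Prod.mk x ⁻¹' S) ∂μ ≤ ∫⁻ x, ∑' n, (A n).indicator (fun _ ↦ c n) x ∂μ := by
        refine lintegral_mono fun x ↦ ?_
        obtain ⟨n, hxn, hle⟩ := hslice x
        rw [← indicator_of_mem hxn fun _ ↦ c n] at hle
        exact hle.trans (ENNReal.le_tsum n)
    _ = ∑' n, c n * μ (A n) := by
        rw [lintegral_tsum fun n ↦ (measurable_const.indicator (hA n)).aemeasurable]
        simp only [lintegral_indicator_const (hA _)]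
    _ < ∞ := hc.lt_top

theorem volume_lt_top_of_slice_le {S : Set (ℂ × ℂ)} (hS : MeasurableSet S) {b : ℝ} (hb : 1 < b)
    (hS_fst : ∀ z ∈ S, b < ‖z.1‖) {c : ℕ → ℝ} (hc : Summable fun n ↦ b ^ (2 * n) * c n)
    (hslice : ∀ x n, b ^ (n + 1) ≤ ‖x‖ → volume (Prod.mk x ⁻¹' S) ≤ ENNReal.ofReal (c n)) :
    volume S < ∞ := by
  rw [Measure.volume_eq_prod]
  refine Measure.prod_lt_top_of_slice_le hS (A := fun n ↦ ball 0 (b ^ (n + 2)))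
    (fun _ ↦ measurableSet_ball) (c := fun n ↦ ENNReal.ofReal (c n)) ?_ fun x ↦ ?_
  · have hterm : ∀ n, ENNReal.ofReal (c n) * volume (ball (0 : ℂ) (b ^ (n + 2))) =
        ENNReal.ofReal (π * b ^ 4 * (b ^ (2 * n) * c n)) := fun n ↦ by
      rw [Complex.volume_ball_of_nonneg _ (by positivity), mul_comm,
        ← ENNReal.ofReal_mul (by positivity)]
      ring_nf
    simp only [hterm]
    exact (hc.mul_left _).tsum_ofReal_ne_top
  · by_cases hx : b < ‖x‖
    · obtain ⟨n, h1, h2⟩ := exists_pow_succ_le_lt_pow_add_two hb hx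
      exact ⟨n, mem_ball_zero_iff.2 h2, hslice x n h1⟩
    · have hempty : Prod.mk x ⁻¹' S = ∅ :=
        eq_empty_of_forall_notMem fun y hy ↦ hx (hS_fst _ hy)
      refine ⟨0, mem_ball_zero_iff.2 ?_, by simp [hempty]⟩
      exact (not_lt.1 hx).trans_lt (lt_self_pow₀ hb one_lt_two)

theorem MeasureTheory.setLIntegral_pos_of_isOpen {α : Type*} [TopologicalSpace α]
    [MeasurableSpace α] [OpensMeasurableSpace α] {μ : Measure α} [μ.IsOpenPosMeasure]
    {f : α → ℝ≥0∞} (hf : Measurable f) {s U : Set α} (hU : IsOpen U) (hUne : U.Nonempty)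
    (hUs : U ⊆ s) (hfU : ∀ x ∈ U, f x ≠ 0) : 0 < ∫⁻ x in s, f x ∂μ := by
  rw [setLIntegral_pos_iff hf]
  exact (hU.measure_pos μ hUne).trans_le (measure_mono fun x hx ↦ ⟨hfU x hx, hUs hx⟩)

def regionX : Set (ℂ × ℂ) :=
  {z | 4 < ‖z.1‖ ∧ ‖z.2‖ < 1 / (2 * ‖z.1‖ * (Real.log (‖z.1‖) / Real.log 4))}

def regionY : Set (ℂ × ℂ) :=
  {z | 4 < ‖z.2‖ ∧ |‖z.1‖ - 1 / ‖z.2‖| < 1 / (‖z.2‖) ^ 3}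

def regionZ : Set (ℂ × ℂ) := {z | ‖z.1‖ ≤ 4 ∧ ‖z.2‖ ≤ 4}

theorem measurableSet_regionX : MeasurableSet regionX := by
  rw [regionX, ofPred_and]
  exact (measurableSet_lt (by fun_prop) (by fun_prop)).inter
    (measurableSet_lt (by fun_prop) (by fun_prop))

theorem measurableSet_regionY : MeasurableSet regionY := by
  rw [regionY, ofPred_and]
  exact (measurableSet_lt (by fun_prop) (by fun_prop)).inter
    (measurableSet_lt (by fun_prop) (by fun_prop))

theorem norm_mul_le_one_of_mem_regionX {z : ℂ × ℂ} (hz : z ∈ regionX) : ‖z.1 * z.2‖ ≤ 1 := by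
  obtain ⟨h1, h2⟩ := hz
  rw [log_div_log] at h2
  have hL : 1 ≤ logb 4 ‖z.1‖ := by
    rw [le_logb_iff_rpow_le (by norm_num) (by linarith)]; norm_num; linarith
  rw [lt_div_iff₀ (by positivity)] at h2
  rw [norm_mul]
  nlinarith [norm_nonneg z.2, mul_nonneg (norm_nonneg z.1) (norm_nonneg z.2)]

theorem norm_mul_le_two_of_mem_regionY {z : ℂ × ℂ} (hz : z ∈ regionY) : ‖z.1 * z.2‖ ≤ 2 := by
  obtain ⟨h1, h2⟩ := hz
  set s := ‖z.2‖
  have hs : 0 < s := by linarith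
  have h1z : ‖z.1‖ < 1 / s + 1 / s ^ 3 := by linarith [(abs_lt.1 h2).2]
  have hmul : (1 / s + 1 / s ^ 3) * s = 1 + 1 / s ^ 2 := by field_simp
  have hinv : 1 / s ^ 2 ≤ 1 := by rw [div_le_one (by positivity)]; nlinarith
  rw [norm_mul]
  nlinarith [norm_nonneg z.1]

theorem norm_mul_le_of_mem_regionZ {z : ℂ × ℂ} (hz : z ∈ regionZ) : ‖z.1 * z.2‖ ≤ 16 := by
  rw [norm_mul]
  nlinarith [norm_nonneg z.1, norm_nonneg z.2, hz.1, hz.2]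

theorem norm_mul_le_of_mem_union {z : ℂ × ℂ} (hz : z ∈ regionX ∪ regionY ∪ regionZ) :
    ‖z.1 * z.2‖ ≤ 16 := by
  rcases hz with (hX | hY) | hZ
  · linarith [norm_mul_le_one_of_mem_regionX hX]
  · linarith [norm_mul_le_two_of_mem_regionY hY]
  · exact norm_mul_le_of_mem_regionZ hZ

theorem volume_regionX_lt_top : volume regionX < ∞ := by
  refine volume_lt_top_of_slice_le measurableSet_regionX (b := 4) (by norm_num) (fun z hz ↦ hz.1)
    (c := fun n ↦ π * (1 / (4 ^ (n + 1) * (n + 1))) ^ 2) ?_ fun x n hn ↦ ?_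
  · have hsum := (summable_nat_add_iff 1).2 (Real.summable_one_div_nat_pow.2 one_lt_two)
    refine (hsum.mul_left (π / 16)).congr fun n ↦ ?_
    push_cast
    field_simp
    ring
  · have hx : 0 < ‖x‖ := lt_of_lt_of_le (by positivity) hn
    have hL : (n + 1 : ℝ) ≤ logb 4 ‖x‖ := by
      rw [le_logb_iff_rpow_le (by norm_num) hx]; exact_mod_cast hn
    rw [← Complex.volume_ball_of_nonneg _ (by positivity)]
    refine measure_mono fun y ⟨_, hy⟩ ↦ mem_ball_zero_iff.2 (hy.trans_le ?_)
    rw [log_div_log]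
    apply one_div_le_one_div_of_le (by positivity)
    nlinarith [pow_pos (show (0:ℝ) < 4 by norm_num) (n + 1)]

theorem volume_regionY_lt_top : volume regionY < ∞ := by
  have hswap : volume (Prod.swap ⁻¹' regionY) = volume regionY := by
    rw [Measure.volume_eq_prod]
    exact Measure.measurePreserving_swap.measure_preimage measurableSet_regionY.nullMeasurableSet
  rw [← hswap]
  refine volume_lt_top_of_slice_le (measurableSet_regionY.preimage measurable_swap) (b := 4)
    (by norm_num) (fun z hz ↦ hz.1) (c := fun n ↦ 4 * π / (4 ^ (n + 1)) ^ 4) ?_ fun x n hn ↦ ?_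
  · refine ((summable_geometric_of_lt_one (by norm_num) (by norm_num : (16 : ℝ)⁻¹ < 1)).mul_left
      (π / 64)).congr fun n ↦ ?_
    have h16 : (4 : ℝ) ^ (2 * n) = 16 ^ n := by rw [pow_mul]; norm_num
    have h256 : ((4 : ℝ) ^ (n + 1)) ^ 4 = 256 * (16 ^ n * 16 ^ n) := by
      rw [← mul_pow, ← pow_mul, pow_mul']; norm_num; ring
    rw [h16, h256, inv_pow]
    field_simp
    ring
  · set s := ‖x‖
    have hs : 4 ≤ s := le_trans (le_self_pow₀ (by norm_num) (by omega)) hn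
    calc volume (Prod.mk x ⁻¹' (Prod.swap ⁻¹' regionY))
        ≤ volume {y : ℂ | |‖y‖ - 1 / s| < 1 / s ^ 3} := measure_mono fun y hy ↦ hy.2
      _ ≤ ENNReal.ofReal (4 * π * (1 / s) * (1 / s ^ 3)) :=
          Complex.volume_setOf_abs_norm_sub_lt_le (by positivity)
            (one_div_le_one_div_of_le (by positivity) (le_self_pow₀ (by linarith) (by norm_num)))
      _ ≤ ENNReal.ofReal (4 * π / (4 ^ (n + 1)) ^ 4) := by
          apply ENNReal.ofReal_le_ofReal
          rw [show 4 * π * (1 / s) * (1 / s ^ 3) = 4 * π / s ^ 4 by field_simp]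
          gcongr

theorem volume_regionZ_lt_top : volume regionZ < ∞ :=
  measure_closedBall_lt_top.trans_le' <| measure_mono fun _ hz ↦
    mem_closedBall_zero_iff.2 (max_le hz.1 hz.2)

theorem volume_union_lt_top : volume (regionX ∪ regionY ∪ regionZ) < ∞ :=
  measure_union_lt_top (measure_union_lt_top volume_regionX_lt_top volume_regionY_lt_top)
    volume_regionZ_lt_top

/-- Each monomial `(z₁z₂)^k` is square-integrable on `Ω` with strictly positive norm:
`0 < c_k² < ∞` where `c_k² = ∫_Ω |z₁z₂|^{2k} dV`. -/
theorem stmt_10 (X Y Z Ω : Set (ℂ × ℂ))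
    (hX : X = {z : ℂ × ℂ | 4 < ‖z.1‖ ∧
      ‖z.2‖ < 1 / (2 * ‖z.1‖ * (Real.log (‖z.1‖) / Real.log 4))})
    (hY : Y = {z : ℂ × ℂ | 4 < ‖z.2‖ ∧
      |‖z.1‖ - 1 / ‖z.2‖| < 1 / (‖z.2‖) ^ 3})
    (hZ : Z = {z : ℂ × ℂ | ‖z.1‖ ≤ 4 ∧ ‖z.2‖ ≤ 4})
    (hΩ : Ω = X ∪ Y ∪ Z) (k : ℕ) :
    0 < (∫⁻ z in Ω, ENNReal.ofReal (‖z.1 * z.2‖ ^ (2 * k))) ∧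
      (∫⁻ z in Ω, ENNReal.ofReal (‖z.1 * z.2‖ ^ (2 * k))) < ⊤ := by
  subst hX hY hZ hΩ
  constructor
  · refine setLIntegral_pos_of_isOpen (by fun_prop) (U := ball 0 4 ∩ {z | z.1 * z.2 ≠ 0})
      (isOpen_ball.inter (isOpen_ne_fun (by fun_prop) (by fun_prop))) ⟨(1, 1), by simp⟩
      (fun z hz ↦ Or.inr ?_) fun z hz ↦ (ENNReal.ofReal_pos.2 (pow_pos (norm_pos_iff.2 hz.2) _)).ne'
    have hz4 := mem_ball_zero_iff.1 hz.1
    exact ⟨(norm_fst_le z).trans hz4.le, (norm_snd_le z).trans hz4.le⟩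
  · refine setLIntegral_lt_top_of_le_nnreal volume_union_lt_top.ne
      ⟨(16 ^ (2 * k) : ℝ).toNNReal, fun z hz ↦ ENNReal.ofReal_le_ofReal ?_⟩
    exact pow_le_pow_left₀ (norm_nonneg _) (norm_mul_le_of_mem_union hz) _
end

section
/- Let f : ℂ → ℂ be measurable, radial (f(w) depends only on |w|, i.e., |w| = |w′| implies f(w) = f(w′)), and integrable on the open unit disc 𝔻 = {w ∈ ℂ : |w| < 1}. Then for every z ∈ 𝔻, ∫_{w ∈ 𝔻} f(w) · (1 − z·conj(w))^{−2} dA(w) = ∫_{w ∈ 𝔻} f(w) dA(w); in particular, the Bergman projection (with kernel K_𝔻(z,w) = π^{−1}(1 − z·conj(w))^{−2}) of a radial integrable function on the disc is the constant π^{−1}∫_𝔻 f dA. -/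
open Complex MeasureTheory Metric Real Set
open scoped ComplexConjugate

/-!
Average over rotations. Since `f` is radial, replacing `w` by `e^{-iθ} w` leaves
`∫_𝔻 f(w) g(z·conj w) dA` unchanged but turns `g(z·conj w)` into `g(z·conj w·e^{iθ})`. Averaging
over `θ ∈ [0, 2π]` and applying Fubini, the inner integral is the circle average of the
holomorphic function `ζ ↦ g(z·conj w·ζ)` over the unit circle, which is `g(0)` by the mean value
property. For the Bergman kernel `g(c) = (1 - c)⁻²` one has `g(0) = 1`.
-/

theorem circleAverage_comp_mul {E : Type*} [NormedAddCommGroup E] [NormedSpace ℂ E]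
    [CompleteSpace E] {g : ℂ → E} {r : ℝ} (hg : DifferentiableOn ℂ g (closedBall 0 r)) {c : ℂ}
    (hc : ‖c‖ ≤ r) : circleAverage (fun ζ ↦ g (c * ζ)) 0 1 = g 0 := by
  have hgc : DifferentiableOn ℂ (fun ζ ↦ g (c * ζ)) (closedBall 0 |1|) := by
    refine hg.comp (by fun_prop) fun ζ hζ ↦ ?_
    rw [abs_one, mem_closedBall_zero_iff] at hζ
    rw [mem_closedBall_zero_iff, norm_mul]
    exact (mul_le_of_le_one_right (norm_nonneg c) hζ).trans hc
  simpa using (hgc.diffContOnCl_ball subset_rfl).circleAverage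

theorem LinearIsometryEquiv.setIntegral_ball_zero_comp {V E : Type*} [NormedAddCommGroup V]
    [InnerProductSpace ℝ V] [FiniteDimensional ℝ V] [MeasurableSpace V] [BorelSpace V]
    [NormedAddCommGroup E] [NormedSpace ℝ E] (e : V ≃ₗᵢ[ℝ] V) (F : V → E) (R : ℝ) :
    ∫ x in ball 0 R, F (e x) = ∫ x in ball 0 R, F x := by
  have h := e.measurePreserving.setIntegral_preimage_emb
    e.toHomeomorph.measurableEmbedding F (ball 0 R)
  rwa [e.preimage_ball, map_zero] at h

section RadialAverage

variable {f g : ℂ → ℂ} {R : ℝ} {z : ℂ}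

theorem norm_mul_conj_le {w : ℂ} (hw : w ∈ ball (0 : ℂ) R) : ‖z * conj w‖ ≤ ‖z‖ * R := by
  rw [norm_mul, norm_conj]
  exact mul_le_mul_of_nonneg_left (mem_ball_zero_iff.1 hw).le (norm_nonneg z)

theorem norm_mul_conj_mul_circleMap_le {w : ℂ} (hw : w ∈ ball (0 : ℂ) R) (θ : ℝ) :
    ‖z * conj w * circleMap 0 1 θ‖ ≤ ‖z‖ * R := by
  simpa only [norm_mul, norm_circleMap_zero, abs_one, mul_one] using norm_mul_conj_le hw

theorem integrable_mul_comp_mul_conj_mul_circleMap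
    (hf_int : IntegrableOn f (ball 0 R)) (hg : ContinuousOn g (closedBall 0 (‖z‖ * R))) :
    Integrable (fun p : ℝ × ℂ ↦ f p.2 * g (z * conj p.2 * circleMap 0 1 p.1))
      ((volume.restrict (Ioc 0 (2 * π))).prod (volume.restrict (ball 0 R))) := by
  obtain ⟨C, hC⟩ := (isCompact_closedBall (0 : ℂ) (‖z‖ * R)).exists_bound_of_continuousOn hg
  have hg_cont : ContinuousOn (fun p : ℝ × ℂ ↦ g (z * conj p.2 * circleMap 0 1 p.1))
      (Ioc 0 (2 * π) ×ˢ ball 0 R) :=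
    hg.comp (by fun_prop) fun p hp ↦ mem_closedBall_zero_iff.2
      (norm_mul_conj_mul_circleMap_le hp.2 p.1)
  refine (hf_int.comp_snd _).mul_bdd (c := C) ?_ ?_ <;>
    rw [Measure.prod_restrict, ← Measure.volume_eq_prod]
  · exact hg_cont.aestronglyMeasurable (measurableSet_Ioc.prod measurableSet_ball)
  · filter_upwards [ae_restrict_mem (measurableSet_Ioc.prod measurableSet_ball)] with p hp
    exact hC _ (mem_closedBall_zero_iff.2 (norm_mul_conj_mul_circleMap_le hp.2 p.1))

theorem setIntegral_ball_mul_comp_mul_conj_of_radial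
    (hf_rad : ∀ w w' : ℂ, ‖w‖ = ‖w'‖ → f w = f w') (hf_int : IntegrableOn f (ball 0 R))
    (hg : DifferentiableOn ℂ g (closedBall 0 (‖z‖ * R))) :
    ∫ w in ball 0 R, f w * g (z * conj w) = g 0 * ∫ w in ball 0 R, f w := by
  set F : ℝ → ℂ → ℂ := fun θ w ↦ f w * g (z * conj w * circleMap 0 1 θ)
  have h_rot (θ : ℝ) : ∫ w in ball 0 R, F θ w = ∫ w in ball 0 R, f w * g (z * conj w) := by
    rw [← (rotation (Circle.exp (-θ))).setIntegral_ball_zero_comp (fun w ↦ f w * g (z * conj w))]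
    refine setIntegral_congr_fun measurableSet_ball fun w _ ↦ ?_
    have h_conj : conj (Circle.exp (-θ) * w) = circleMap 0 1 θ * conj w := by
      rw [map_mul, Circle.coe_exp, ← exp_conj]
      simp [circleMap_zero]
    rw [rotation_apply, h_conj, hf_rad (Circle.exp (-θ) * w) w (by simp), mul_left_comm z,
      mul_comm (circleMap 0 1 θ)]
  have h_avg : ∀ w ∈ ball (0 : ℂ) R,
      ∫ θ in Ioc 0 (2 * π), F θ w = ((2 * π : ℝ) : ℂ) * (f w * g 0) := by
    intro w hw
    have h := circleAverage_comp_mul hg (norm_mul_conj_le hw)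
    rw [circleAverage_def, Complex.real_smul] at h
    rw [← intervalIntegral.integral_of_le two_pi_pos.le, intervalIntegral.integral_const_mul, ← h]
    push_cast
    field_simp
  refine mul_left_cancel₀ (ofReal_ne_zero.2 two_pi_pos.ne') ?_
  calc ((2 * π : ℝ) : ℂ) * ∫ w in ball 0 R, f w * g (z * conj w)
      = ∫ θ in Ioc 0 (2 * π), ∫ w in ball 0 R, F θ w := by
        rw [integral_congr_ae (ae_of_all _ h_rot), setIntegral_const,
          Real.volume_real_Ioc_of_le two_pi_pos.le, sub_zero, real_smul]
    _ = ∫ w in ball 0 R, ∫ θ in Ioc 0 (2 * π), F θ w :=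
        integral_integral_swap (integrable_mul_comp_mul_conj_mul_circleMap hf_int hg.continuousOn)
    _ = ((2 * π : ℝ) : ℂ) * (g 0 * ∫ w in ball 0 R, f w) := by
        rw [setIntegral_congr_fun measurableSet_ball h_avg, integral_const_mul,
          integral_mul_const, mul_comm (g 0)]

end RadialAverage

theorem differentiableOn_inv_one_sub_sq {r : ℝ} (hr : r < 1) :
    DifferentiableOn ℂ (fun c : ℂ ↦ ((1 - c) ^ 2)⁻¹) (closedBall 0 r) := by
  refine DifferentiableOn.inv (by fun_prop) fun c hc ↦ pow_ne_zero _ (sub_ne_zero.2 ?_)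
  rintro rfl
  rw [mem_closedBall_zero_iff, norm_one] at hc
  linarith

theorem stmt_14_general (f : ℂ → ℂ)
    (hf_rad : ∀ w w' : ℂ, ‖w‖ = ‖w'‖ → f w = f w')
    (hf_int : IntegrableOn f (Metric.ball (0 : ℂ) 1)) :
    ∀ z ∈ Metric.ball (0 : ℂ) 1,
      ∫ w in Metric.ball (0 : ℂ) 1, f w * ((1 - z * (starRingEnd ℂ) w) ^ 2)⁻¹ =
        ∫ w in Metric.ball (0 : ℂ) 1, f w := by
  intro z hz
  have hz' : ‖z‖ * 1 < 1 := by simpa using hz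
  simpa using setIntegral_ball_mul_comp_mul_conj_of_radial hf_rad hf_int
    (differentiableOn_inv_one_sub_sq hz')

/-- The Bergman projection of a radial integrable function on the unit disc is constant:
for radial integrable `f` and any `z` in the disc,
`∫_𝔻 f(w) (1 − z·conj w)^{−2} dA(w) = ∫_𝔻 f(w) dA(w)`. -/
theorem stmt_14 (f : ℂ → ℂ) (hf_meas : Measurable f)
    (hf_rad : ∀ w w' : ℂ, ‖w‖ = ‖w'‖ → f w = f w')
    (hf_int : IntegrableOn f (Metric.ball (0 : ℂ) 1)) :
    ∀ z ∈ Metric.ball (0 : ℂ) 1,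
      ∫ w in Metric.ball (0 : ℂ) 1, f w * ((1 - z * (starRingEnd ℂ) w) ^ 2)⁻¹ =
        ∫ w in Metric.ball (0 : ℂ) 1, f w :=
  stmt_14_general f hf_rad hf_int
end

section
/- Let D = D₁(0) ∩ D₁(1) ⊂ ℂ (the lens-shaped intersection of the open unit discs centered at 0 and at 1), let 𝔻 be the open unit disc, and let F : D → 𝔻 be a holomorphic bijection from D onto 𝔻 with derivative F′. Let H : ℂ → ℂ be continuous, radial (H(ξ) depends only on |ξ|), and supported in a compact subset of 𝔻. Then for every z ∈ D, ∫_{w ∈ D} F′(z) · (1 − F(z)·conj(F(w)))^{−2} · conj(F′(w)) · H(F(w)) · F′(w) dA(w) = ( ∫_{ξ ∈ 𝔻} H(ξ) dA(ξ) ) · F′(z). That is, the projection of χ(w) = H(F(w))F′(w) against the transformed kernel F′(z)K_𝔻(F(z),F(w))conj(F′(w)) equals a constant multiple c·F′(z), with c = π^{-1}∫_𝔻 H dA (kernels normalized with the factor 1/π on both sides). -/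
/-!
The Jacobian of a holomorphic change of variables is `|F'|²`, so substituting `ξ = F w` turns the
integral over `D` into `F'(z) ∫_𝔻 (1 - F(z) conj ξ)⁻² H(ξ) dA(ξ)`. Since `H` is radial, this
integral is unchanged if `ξ` is rotated; averaging over all rotations and using Fubini replaces
`(1 - F(z) conj ξ)⁻²` by its average over the circle through `ξ`, which by the mean value property
of the holomorphic function `c ↦ (1 - F(z) conj ξ c)⁻²` is its value `1` at `c = 0`.
-/

open Complex ComplexConjugate MeasureTheory Metric Real

theorem ContinuousLinearMap.det_restrictScalars_toSpanSingleton (c : ℂ) :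
    ((ContinuousLinearMap.toSpanSingleton ℂ c).restrictScalars ℝ).det = normSq c := by
  rw [ContinuousLinearMap.det, ContinuousLinearMap.coe_restrictScalars,
    LinearMap.det_restrictScalars, Algebra.norm_complex_apply]
  congr
  simp

theorem integral_image_eq_integral_normSq_deriv_smul {E : Type*} [NormedAddCommGroup E]
    [NormedSpace ℝ E] {s : Set ℂ} {F F' : ℂ → ℂ} (hs : MeasurableSet s)
    (hF : ∀ w ∈ s, HasDerivAt F (F' w) w) (hF_inj : Set.InjOn F s) (g : ℂ → E) :
    ∫ ξ in F '' s, g ξ = ∫ w in s, normSq (F' w) • g (F w) := by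
  rw [integral_image_eq_integral_abs_det_fderiv_smul volume hs
    (fun w hw => ((hF w hw).hasFDerivAt.restrictScalars ℝ).hasFDerivWithinAt) hF_inj]
  simp only [ContinuousLinearMap.det_restrictScalars_toSpanSingleton,
    abs_of_nonneg (normSq_nonneg _)]

theorem setIntegral_ball_comp_circle_mul {E : Type*} [NormedAddCommGroup E]
    [NormedSpace ℝ E] (f : ℂ → E) (c : Circle) (r : ℝ) :
    ∫ ξ in ball 0 r, f (c * ξ) = ∫ ξ in ball 0 r, f ξ := by
  have h := (rotation c).measurePreserving.setIntegral_image_emb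
    (rotation c).toHomeomorph.measurableEmbedding f (ball 0 r)
  rwa [LinearIsometryEquiv.image_ball, map_zero, eq_comm] at h

theorem setIntegral_ball_eq_setIntegral_circleAverage {E : Type*} [NormedAddCommGroup E]
    [NormedSpace ℝ E] [CompleteSpace E] {f : ℂ → E} {r : ℝ}
    (hf : ContinuousOn f (closedBall 0 r)) :
    ∫ ξ in ball 0 r, f ξ = ∫ ξ in ball 0 r, circleAverage (fun c => f (c * ξ)) 0 1 := by
  set φ : ℝ → ℂ → E := fun θ ξ => f (circleMap 0 1 θ * ξ)
  have hrot (θ : ℝ) : ∫ ξ in ball 0 r, φ θ ξ = ∫ ξ in ball 0 r, f ξ := by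
    simpa [φ, circleMap_zero] using setIntegral_ball_comp_circle_mul f (Circle.exp θ) r
  have hφ : Integrable (Function.uncurry φ)
      ((volume.restrict (Set.Ioc 0 (2 * π))).prod (volume.restrict (ball 0 r))) := by
    rw [Measure.prod_restrict, ← Measure.volume_eq_prod]
    refine ContinuousOn.integrableOn_compact (isCompact_Icc.prod (isCompact_closedBall 0 r))
      (hf.comp (by fun_prop) fun p hp => ?_) |>.mono_set
      (Set.prod_mono Set.Ioc_subset_Icc_self ball_subset_closedBall)
    simpa [circleMap_zero] using hp.2
  calc ∫ ξ in ball 0 r, f ξ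
      = (2 * π)⁻¹ • ∫ θ in 0..2 * π, ∫ ξ in ball 0 r, φ θ ξ := by
        simp only [hrot, intervalIntegral.integral_const, sub_zero, smul_smul]
        rw [inv_mul_cancel₀ (by positivity), one_smul]
    _ = (2 * π)⁻¹ • ∫ ξ in ball 0 r, ∫ θ in 0..2 * π, φ θ ξ := by
        rw [intervalIntegral.integral_of_le (by positivity), integral_integral_swap hφ]
        simp only [intervalIntegral.integral_of_le two_pi_pos.le]
    _ = ∫ ξ in ball 0 r, circleAverage (fun c => f (c * ξ)) 0 1 := by
        rw [← integral_smul]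
        rfl

theorem setIntegral_ball_one_comp_mul_conj_mul_radial {g : ℂ → ℂ}
    (hg : DifferentiableOn ℂ g (ball 0 1)) {ζ : ℂ} (hζ : ζ ∈ ball (0 : ℂ) 1) {H : ℂ → ℂ}
    (hH_cont : ContinuousOn H (closedBall 0 1))
    (hH_rad : ∀ ξ ξ' : ℂ, ‖ξ‖ = ‖ξ'‖ → H ξ = H ξ') :
    ∫ ξ in ball 0 1, g (ζ * conj ξ) * H ξ = g 0 * ∫ ξ in ball 0 1, H ξ := by
  rw [mem_ball_zero_iff] at hζ
  have hmaps {a c : ℂ} (ha : ‖a‖ ≤ 1) (hc : ‖c‖ ≤ 1) : ζ * a * c ∈ ball 0 1 := by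
    rw [mem_ball_zero_iff, norm_mul, norm_mul]
    calc ‖ζ‖ * ‖a‖ * ‖c‖ ≤ ‖ζ‖ * 1 * 1 := by gcongr
      _ < 1 := by simpa using hζ
  have hcont : ContinuousOn (fun ξ => g (ζ * conj ξ) * H ξ) (closedBall 0 1) := by
    refine (hg.continuousOn.comp (by fun_prop) fun ξ hξ => ?_).mul hH_cont
    simpa using hmaps (a := conj ξ) (c := 1) (by simpa using hξ) norm_one.le
  rw [setIntegral_ball_eq_setIntegral_circleAverage hcont, ← integral_const_mul]
  refine setIntegral_congr_fun measurableSet_ball fun ξ hξ => ?_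
  have hξ : ‖conj ξ‖ ≤ 1 := by simpa using (mem_ball_zero_iff.mp hξ).le
  have hmean : circleAverage (fun c => g (ζ * conj ξ * c)) 0 1 = g 0 := by
    have hdiff : DifferentiableOn ℂ (fun c => g (ζ * conj ξ * c)) (closedBall 0 1) :=
      hg.comp (by fun_prop) fun c hc => hmaps hξ (by simpa using hc)
    have hcl : DiffContOnCl ℂ (fun c => g (ζ * conj ξ * c)) (ball 0 |1|) := by
      rw [abs_one]
      exact DifferentiableOn.diffContOnCl (by rwa [closure_ball _ one_ne_zero])
    simpa using hcl.circleAverage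
  calc circleAverage (fun c => g (ζ * conj (c * ξ)) * H (c * ξ)) 0 1
      = circleAverage (fun c => H ξ • g (ζ * conj ξ * c⁻¹)) 0 1 := by
        -- on the unit circle `conj c = c⁻¹`, and `c ↦ c⁻¹` preserves circle averages
        refine circleAverage_congr_sphere fun c hc => ?_
        have hc : ‖c‖ = 1 := by simpa using hc
        rw [hH_rad (c * ξ) ξ (by simp [hc]), inv_def, normSq_eq_norm_sq, hc]
        simp only [map_mul, one_pow, inv_one, ofReal_one, mul_one, smul_eq_mul]
        rw [mul_comm (H ξ)]
        congr 2
        ring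
    _ = H ξ * g 0 := by
        rw [circleAverage_zero_one_congr_inv (f := fun c => H ξ • g (ζ * conj ξ * c)),
          circleAverage_fun_smul, hmean, smul_eq_mul]
    _ = g 0 * H ξ := mul_comm _ _

theorem stmt_15_general (D : Set ℂ) (hD : D = Metric.ball (0 : ℂ) 1 ∩ Metric.ball (1 : ℂ) 1)
    (F F' : ℂ → ℂ) (hF_deriv : ∀ z ∈ D, HasDerivAt F (F' z) z)
    (hF_bij : Set.BijOn F D (Metric.ball (0 : ℂ) 1))
    (H : ℂ → ℂ) (hH_cont : Continuous H)
    (hH_rad : ∀ ξ ξ' : ℂ, ‖ξ‖ = ‖ξ'‖ → H ξ = H ξ') :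
    ∀ z ∈ D,
      ∫ w in D, F' z * ((1 - F z * (starRingEnd ℂ) (F w)) ^ 2)⁻¹ *
          (starRingEnd ℂ) (F' w) * H (F w) * F' w =
        (∫ ξ in Metric.ball (0 : ℂ) 1, H ξ) * F' z := by
  intro z hz
  have hD_meas : MeasurableSet D := hD ▸ measurableSet_ball.inter measurableSet_ball
  have hkernel : DifferentiableOn ℂ (fun w : ℂ => ((1 - w) ^ 2)⁻¹) (ball 0 1) := by
    refine ((differentiableOn_const 1).sub differentiableOn_id).pow 2 |>.inv fun w hw => ?_
    refine pow_ne_zero 2 (sub_ne_zero.mpr fun h => ?_)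
    simp [← h] at hw
  calc ∫ w in D, F' z * ((1 - F z * conj (F w)) ^ 2)⁻¹ * conj (F' w) * H (F w) * F' w
      = ∫ w in D, normSq (F' w) • (F' z * (((1 - F z * conj (F w)) ^ 2)⁻¹ * H (F w))) :=
        setIntegral_congr_fun hD_meas fun w _ => by
          rw [real_smul, ← mul_conj]
          ring
    _ = ∫ ξ in F '' D, F' z * (((1 - F z * conj ξ) ^ 2)⁻¹ * H ξ) := by
        rw [integral_image_eq_integral_normSq_deriv_smul hD_meas hF_deriv hF_bij.injOn]
    _ = (∫ ξ in ball 0 1, H ξ) * F' z := by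
        rw [hF_bij.image_eq, integral_const_mul,
          setIntegral_ball_one_comp_mul_conj_mul_radial hkernel (hF_bij.mapsTo hz)
            hH_cont.continuousOn hH_rad]
        simp only [sub_zero, one_pow, inv_one, one_mul]
        exact mul_comm _ _

/-- On the lens `D = D₁(0) ∩ D₁(1)`, if `F : D → 𝔻` is a holomorphic bijection with
derivative `F′` and `H` is a continuous radial function compactly supported in `𝔻`,
then the projection of `χ = (H∘F)·F′` against the transformed Bergman kernel
`F′(z)K_𝔻(F(z),F(w))·conj(F′(w))` equals `(∫_𝔻 H dA)·F′(z)`. -/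
theorem stmt_15 (D : Set ℂ) (hD : D = Metric.ball (0 : ℂ) 1 ∩ Metric.ball (1 : ℂ) 1)
    (F F' : ℂ → ℂ) (hF_deriv : ∀ z ∈ D, HasDerivAt F (F' z) z)
    (hF_bij : Set.BijOn F D (Metric.ball (0 : ℂ) 1))
    (H : ℂ → ℂ) (hH_cont : Continuous H)
    (hH_rad : ∀ ξ ξ' : ℂ, ‖ξ‖ = ‖ξ'‖ → H ξ = H ξ')
    (hH_supp : HasCompactSupport H ∧ tsupport H ⊆ Metric.ball (0 : ℂ) 1) :
    ∀ z ∈ D,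
      ∫ w in D, F' z * ((1 - F z * (starRingEnd ℂ) (F w)) ^ 2)⁻¹ *
          (starRingEnd ℂ) (F' w) * H (F w) * F' w =
        (∫ ξ in Metric.ball (0 : ℂ) 1, H ξ) * F' z :=
  stmt_15_general D hD F F' hF_deriv hF_bij H hH_cont hH_rad
end
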